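/- Let S be a subset of E*_n that is an ensemble (a union of intervals of the extended poset restricted to E*_n, satisfying the ensemble axioms), and let S_(k) denote the set of elements of S of level k. Then for all 1 <= k <= n-1: |S_(k+1)| - |S_(k)| is between -1 and 1. -/
import Mathlib

def IsEnsemble (n : ℕ) (S : Finset (ℕ × ℕ)) : Prop :=
  ∃ (k : ℕ) (A : Fin (k + 1) → ℕ × ℕ) (B : Fin (k + 1) → WithTop (ℕ × ℕ)),
    A 0 = (0, 0) ∧
    (∀ i, (A i : WithTop (ℕ × ℕ)) ≤ B i) ∧
    (∀ i : Fin k, B i.castSucc + (((1, 1) : ℕ × ℕ) : WithTop (ℕ × ℕ)) ≤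
      ((A i.succ : ℕ × ℕ) : WithTop (ℕ × ℕ))) ∧
    (B (Fin.last k) = ⊤ ∨ ∃ b : ℕ × ℕ, B (Fin.last k) = (b : WithTop (ℕ × ℕ)) ∧ b.1 + b.2 < n) ∧
    (∀ p : ℕ × ℕ, p ∈ S ↔ 1 ≤ p.1 + p.2 ∧ p.1 + p.2 ≤ n ∧
      ∃ i, (A i : WithTop (ℕ × ℕ)) ≤ (p : WithTop (ℕ × ℕ)) ∧ (p : WithTop (ℕ × ℕ)) ≤ B i)

/-- For an ensemble `S` in `E*_n` and `1 ≤ k ≤ n-1`, the numbers of elements of `S` at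
consecutive levels `k` and `k+1` differ by at most `1`. -/
theorem ensemble_consecutive_levels (n : ℕ) (S : Finset (ℕ × ℕ)) (hS : IsEnsemble n S)
    (k : ℕ) (hk1 : 1 ≤ k) (hk2 : k ≤ n - 1) :
    |((S.filter fun p => p.1 + p.2 = k + 1).card : ℤ) -
      ((S.filter fun p => p.1 + p.2 = k).card : ℤ)| ≤ 1 := by
  obtain ⟨m, A, B, hA0, hAB, hBA, hlast, hmem⟩ := hS
  have hn : k + 1 ≤ n := by omega
  -- chain: for i < j, B i + (1,1) ≤ A j
  have chain : ∀ j i : Fin (m+1), i < j →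
      B i + (((1,1) : ℕ×ℕ) : WithTop (ℕ×ℕ)) ≤ ((A j : ℕ×ℕ) : WithTop (ℕ×ℕ)) := by
    intro j
    induction j using Fin.induction with
    | zero => intro i hi; simp [Fin.lt_def] at hi
    | succ j ih =>
      intro i hi
      have hi' : i.val ≤ j.val := by
        rw [Fin.lt_def] at hi; simp at hi; omega
      rcases eq_or_lt_of_le hi' with h | h
      · have hieq : i = j.castSucc := Fin.ext (by simpa using h)
        rw [hieq]; exact hBA j
      · have h2 := ih i (by rw [Fin.lt_def]; simpa using h)
        have h3 := hAB j.castSucc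
        have h4 := hBA j
        cases hb : B j.castSucc with
        | top =>
          rw [hb] at h4
          simp only [WithTop.top_add] at h4
          exact absurd h4 (by simp)
        | coe b =>
          rw [hb] at h3 h4
          have hAb : A j.castSucc ≤ b := WithTop.coe_le_coe.mp h3
          calc B i + (((1,1) : ℕ×ℕ) : WithTop (ℕ×ℕ))
              ≤ ((A j.castSucc : ℕ×ℕ) : WithTop (ℕ×ℕ)) := h2
            _ ≤ (b : WithTop (ℕ×ℕ)) := WithTop.coe_le_coe.mpr hAb
            _ ≤ (b : WithTop (ℕ×ℕ)) + (((1,1) : ℕ×ℕ) : WithTop (ℕ×ℕ)) := by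
                rw [← WithTop.coe_add]
                exact WithTop.coe_le_coe.mpr
                  (Prod.le_def.mpr ⟨Nat.le_add_right _ _, Nat.le_add_right _ _⟩)
            _ ≤ _ := h4
  -- level gap between distinct intervals
  have step : ∀ (i j : Fin (m+1)) (p q : ℕ×ℕ), i < j →
      ((p : ℕ×ℕ) : WithTop (ℕ×ℕ)) ≤ B i →
      ((A j : ℕ×ℕ) : WithTop (ℕ×ℕ)) ≤ (q : WithTop (ℕ×ℕ)) →
      p.1 + p.2 + 2 ≤ q.1 + q.2 := by
    intro i j p q hij hp hq
    have hc := chain j i hij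
    cases hb : B i with
    | top =>
      rw [hb] at hc
      simp only [WithTop.top_add] at hc
      exact absurd hc (by simp)
    | coe b =>
      rw [hb] at hp
      rw [hb, ← WithTop.coe_add] at hc
      have h1 := WithTop.coe_le_coe.mp hp
      have h2 := WithTop.coe_le_coe.mp hc
      have h3 := WithTop.coe_le_coe.mp hq
      have e1 : p.1 ≤ b.1 := h1.1
      have e2 : p.2 ≤ b.2 := h1.2
      have e3 : b.1 + 1 ≤ (A j).1 := h2.1
      have e4 : b.2 + 1 ≤ (A j).2 := h2.2
      have e5 : (A j).1 ≤ q.1 := h3.1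
      have e6 : (A j).2 ≤ q.2 := h3.2
      omega
  -- uniqueness of covering interval for equal levels
  have cover : ∀ (p q : ℕ×ℕ), p.1 + p.2 = q.1 + q.2 →
      ∀ i j : Fin (m+1), ((A i : ℕ×ℕ) : WithTop (ℕ×ℕ)) ≤ ↑p → (↑p : WithTop (ℕ×ℕ)) ≤ B i →
      ((A j : ℕ×ℕ) : WithTop (ℕ×ℕ)) ≤ ↑q → (↑q : WithTop (ℕ×ℕ)) ≤ B j → i = j := by
    intro p q hl i j hi1 hi2 hj1 hj2
    rcases lt_trichotomy i j with h | h | h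
    · have := step i j p q h hi2 hj1; omega
    · exact h
    · have := step j i q p h hj2 hi1; omega
  -- downward: |S_(l+1)| ≤ |S_(l)| + 1
  have key_down : ∀ l : ℕ, 1 ≤ l → l + 1 ≤ n →
      (S.filter fun p => p.1 + p.2 = l + 1).card ≤ (S.filter fun p => p.1 + p.2 = l).card + 1 := by
    intro l hl hln
    rcases (S.filter fun p => p.1 + p.2 = l + 1).eq_empty_or_nonempty with h | ⟨p0, hp0⟩
    · simp [h]
    obtain ⟨hp0S, hp0l⟩ := Finset.mem_filter.mp hp0
    obtain ⟨-, -, j, hj1, hj2⟩ := (hmem p0).mp hp0S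
    have hall : ∀ p ∈ S.filter (fun p => p.1 + p.2 = l + 1),
        ((A j : ℕ×ℕ) : WithTop (ℕ×ℕ)) ≤ ↑p ∧ (↑p : WithTop (ℕ×ℕ)) ≤ B j := by
      intro p hp
      obtain ⟨hpS, hpl⟩ := Finset.mem_filter.mp hp
      obtain ⟨-, -, j', h1, h2⟩ := (hmem p).mp hpS
      have hjj : j' = j := cover p p0 (by omega) j' j h1 h2 hj1 hj2
      rw [← hjj]; exact ⟨h1, h2⟩
    have hsplit := Finset.card_filter_add_card_filter_not
      (s := S.filter fun p => p.1 + p.2 = l + 1) (p := fun p => p.1 = (A j).1)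
    have h1 : ((S.filter fun p => p.1 + p.2 = l + 1).filter fun p => p.1 = (A j).1).card ≤ 1 := by
      apply Finset.card_le_one.mpr
      intro a ha b hb
      simp only [Finset.mem_filter] at ha hb
      have e1 : a.1 + a.2 = l + 1 := ha.1.2
      have e2 : b.1 + b.2 = l + 1 := hb.1.2
      have e3 : a.1 = (A j).1 := ha.2
      have e4 : b.1 = (A j).1 := hb.2
      exact Prod.ext (by omega) (by omega)
    have h2 : ((S.filter fun p => p.1 + p.2 = l + 1).filter fun p => ¬ p.1 = (A j).1).card
        ≤ (S.filter fun p => p.1 + p.2 = l).card := by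
      apply Finset.card_le_card_of_injOn (fun p => (p.1 - 1, p.2))
      · intro p hp
        obtain ⟨hpT, hpne⟩ := Finset.mem_filter.mp hp
        obtain ⟨hA, hB⟩ := hall p hpT
        obtain ⟨hpS, hpl⟩ := Finset.mem_filter.mp hpT
        have hAp : A j ≤ p := WithTop.coe_le_coe.mp hA
        have h1p : (A j).1 ≤ p.1 := hAp.1
        have h2p : (A j).2 ≤ p.2 := hAp.2
        refine Finset.mem_filter.mpr ⟨(hmem _).mpr ⟨?_, ?_, j, ?_, ?_⟩, ?_⟩
        · show 1 ≤ p.1 - 1 + p.2; omega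
        · show p.1 - 1 + p.2 ≤ n; omega
        · exact WithTop.coe_le_coe.mpr
            (Prod.le_def.mpr ⟨show (A j).1 ≤ p.1 - 1 by omega, show (A j).2 ≤ p.2 from h2p⟩)
        · exact le_trans (WithTop.coe_le_coe.mpr
            (Prod.le_def.mpr ⟨show p.1 - 1 ≤ p.1 by omega, le_refl p.2⟩)) hB
        · show p.1 - 1 + p.2 = l; omega
      · intro p hp q hq hpq
        simp only [Finset.coe_filter, Set.mem_setOf_eq, Finset.mem_filter] at hp hq
        simp only [Prod.mk.injEq] at hpq
        obtain ⟨e1, e2⟩ := hpq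
        have l1 : p.1 + p.2 = l + 1 := hp.1.2
        have l2 : q.1 + q.2 = l + 1 := hq.1.2
        exact Prod.ext (by omega) e2
    omega
  -- upward: |S_(l)| ≤ |S_(l+1)| + 1
  have key_up : ∀ l : ℕ, 1 ≤ l → l + 1 ≤ n →
      (S.filter fun p => p.1 + p.2 = l).card ≤ (S.filter fun p => p.1 + p.2 = l + 1).card + 1 := by
    intro l hl hln
    rcases (S.filter fun p => p.1 + p.2 = l).eq_empty_or_nonempty with h | ⟨p0, hp0⟩
    · simp [h]
    obtain ⟨hp0S, hp0l⟩ := Finset.mem_filter.mp hp0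
    obtain ⟨-, -, j, hj1, hj2⟩ := (hmem p0).mp hp0S
    have hall : ∀ p ∈ S.filter (fun p => p.1 + p.2 = l),
        ((A j : ℕ×ℕ) : WithTop (ℕ×ℕ)) ≤ ↑p ∧ (↑p : WithTop (ℕ×ℕ)) ≤ B j := by
      intro p hp
      obtain ⟨hpS, hpl⟩ := Finset.mem_filter.mp hp
      obtain ⟨-, -, j', h1, h2⟩ := (hmem p).mp hpS
      have hjj : j' = j := cover p p0 (by omega) j' j h1 h2 hj1 hj2
      rw [← hjj]; exact ⟨h1, h2⟩
    cases hb : B j with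
    | top =>
      have hle : (S.filter fun p => p.1 + p.2 = l).card
          ≤ (S.filter fun p => p.1 + p.2 = l + 1).card := by
        apply Finset.card_le_card_of_injOn (fun p => (p.1 + 1, p.2))
        · intro p hp
          obtain ⟨hA, -⟩ := hall p hp
          obtain ⟨hpS, hpl⟩ := Finset.mem_filter.mp hp
          have hAp : A j ≤ p := WithTop.coe_le_coe.mp hA
          refine Finset.mem_filter.mpr ⟨(hmem _).mpr ⟨?_, ?_, j, ?_, ?_⟩, ?_⟩
          · show 1 ≤ p.1 + 1 + p.2; omega
          · show p.1 + 1 + p.2 ≤ n; omega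
          · exact WithTop.coe_le_coe.mpr
              (Prod.le_def.mpr ⟨show (A j).1 ≤ p.1 + 1 from le_trans hAp.1 (Nat.le_succ _),
                show (A j).2 ≤ p.2 from hAp.2⟩)
          · rw [hb]; exact le_top
          · show p.1 + 1 + p.2 = l + 1; omega
        · intro p hp q hq hpq
          simp only [Finset.coe_filter, Set.mem_setOf_eq, Finset.mem_filter] at hp hq
          simp only [Prod.mk.injEq] at hpq
          obtain ⟨e1, e2⟩ := hpq
          exact Prod.ext (by omega) e2
      omega
    | coe b =>
      have hsplit := Finset.card_filter_add_card_filter_not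
        (s := S.filter fun p => p.1 + p.2 = l) (p := fun p => p.2 = b.2)
      have h1 : ((S.filter fun p => p.1 + p.2 = l).filter fun p => p.2 = b.2).card ≤ 1 := by
        apply Finset.card_le_one.mpr
        intro a ha c hc
        simp only [Finset.mem_filter] at ha hc
        have e1 : a.1 + a.2 = l := ha.1.2
        have e2 : c.1 + c.2 = l := hc.1.2
        have e3 : a.2 = b.2 := ha.2
        have e4 : c.2 = b.2 := hc.2
        exact Prod.ext (by omega) (by omega)
      have h2 : ((S.filter fun p => p.1 + p.2 = l).filter fun p => ¬ p.2 = b.2).card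
          ≤ (S.filter fun p => p.1 + p.2 = l + 1).card := by
        apply Finset.card_le_card_of_injOn (fun p => (p.1, p.2 + 1))
        · intro p hp
          obtain ⟨hpT, hpne⟩ := Finset.mem_filter.mp hp
          obtain ⟨hA, hB⟩ := hall p hpT
          obtain ⟨hpS, hpl⟩ := Finset.mem_filter.mp hpT
          have hAp : A j ≤ p := WithTop.coe_le_coe.mp hA
          rw [hb] at hB
          have hpb : p ≤ b := WithTop.coe_le_coe.mp hB
          have h2b : p.2 ≤ b.2 := hpb.2
          have h1b : p.1 ≤ b.1 := hpb.1
          have hne' : p.2 ≠ b.2 := hpne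
          refine Finset.mem_filter.mpr ⟨(hmem _).mpr ⟨?_, ?_, j, ?_, ?_⟩, ?_⟩
          · show 1 ≤ p.1 + (p.2 + 1); omega
          · show p.1 + (p.2 + 1) ≤ n; omega
          · exact WithTop.coe_le_coe.mpr
              (Prod.le_def.mpr ⟨show (A j).1 ≤ p.1 from hAp.1,
                show (A j).2 ≤ p.2 + 1 from le_trans hAp.2 (Nat.le_succ _)⟩)
          · rw [hb]
            exact WithTop.coe_le_coe.mpr
              (Prod.le_def.mpr ⟨show p.1 ≤ b.1 from h1b, show p.2 + 1 ≤ b.2 by omega⟩)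
          · show p.1 + (p.2 + 1) = l + 1; omega
        · intro p hp q hq hpq
          simp only [Finset.coe_filter, Set.mem_setOf_eq, Finset.mem_filter] at hp hq
          simp only [Prod.mk.injEq] at hpq
          obtain ⟨e1, e2⟩ := hpq
          exact Prod.ext e1 (by omega)
      omega
  have hd := key_down k hk1 hn
  have hu := key_up k hk1 hn
  rw [abs_le]
  omega
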